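/- Let G be a finite simple graph on n vertices with maximum degree Δ ≥ 2, and suppose each vertex v has a nonnegative integer runtime t(v) and there is a 'charging' function f : V → V such that dist(v, f(v)) ≤ T₂ for all v and t(v) ≤ T₂ + s(f(v)), where s : V → ℕ satisfies Σ_v s(v) ≤ n·T₁. Then Σ_v t(v) ≤ n·T₂ + Δ^(T₂+1)·n·T₁; in particular, if each vertex is in the ball of radius T₂ of at most Δ^(T₂+1) vertices, the average runtime is at most T₂ + Δ^(T₂+1)·T₁. -/
import Mathlib


theorem stmt_18 {V : Type*} [Fintype V] (G : SimpleGraph V) [DecidableRel G.Adj]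
    (Δ : ℕ) (hΔ : 2 ≤ Δ) (hdeg : ∀ v, G.degree v ≤ Δ)
    (T₁ T₂ : ℕ) (t s : V → ℕ) (f : V → V)
    (hdist : ∀ v, G.Reachable v (f v) ∧ G.dist v (f v) ≤ T₂)
    (ht : ∀ v, t v ≤ T₂ + s (f v))
    (hs : ∑ v, s v ≤ Fintype.card V * T₁)
    (hball : ∀ w : V, {v | G.Reachable v w ∧ G.dist v w ≤ T₂}.ncard ≤ Δ ^ (T₂ + 1)) :
    ∑ v, t v ≤ Fintype.card V * T₂ + Δ ^ (T₂ + 1) * Fintype.card V * T₁ ∧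
      ((∑ v, t v : ℝ) / Fintype.card V ≤ (T₂ : ℝ) + (Δ : ℝ) ^ (T₂ + 1) * T₁) := by
  classical
  have hfiber : ∀ w : V, (Finset.univ.filter (fun v => f v = w)).card ≤ Δ ^ (T₂ + 1) := by
    intro w
    have hsub : (↑(Finset.univ.filter (fun v => f v = w)) : Set V) ⊆
        {v | G.Reachable v w ∧ G.dist v w ≤ T₂} := by
      intro v hv
      simp only [Finset.coe_filter, Set.mem_setOf_eq, Finset.mem_univ, true_and] at hv
      subst hv
      exact hdist v
    calc (Finset.univ.filter (fun v => f v = w)).card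
        = (↑(Finset.univ.filter (fun v => f v = w)) : Set V).ncard := by
          rw [Set.ncard_coe_finset]
      _ ≤ {v | G.Reachable v w ∧ G.dist v w ≤ T₂}.ncard :=
          Set.ncard_le_ncard hsub (Set.toFinite _)
      _ ≤ Δ ^ (T₂ + 1) := hball w
  have hcomp : ∑ v, s (f v) ≤ Δ ^ (T₂ + 1) * ∑ w, s w := by
    rw [Finset.sum_comp]
    calc ∑ w ∈ Finset.univ.image f, (Finset.univ.filter (fun v => f v = w)).card • s w
        ≤ ∑ w ∈ Finset.univ.image f, Δ ^ (T₂ + 1) * s w := by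
          apply Finset.sum_le_sum
          intro w _
          exact Nat.mul_le_mul_right _ (hfiber w)
      _ ≤ ∑ w, Δ ^ (T₂ + 1) * s w :=
          Finset.sum_le_sum_of_subset (Finset.subset_univ _)
      _ = Δ ^ (T₂ + 1) * ∑ w, s w := by rw [Finset.mul_sum]
  have hmain : ∑ v, t v ≤ Fintype.card V * T₂ + Δ ^ (T₂ + 1) * Fintype.card V * T₁ := by
    calc ∑ v, t v ≤ ∑ v, (T₂ + s (f v)) := Finset.sum_le_sum (fun v _ => ht v)
      _ = Fintype.card V * T₂ + ∑ v, s (f v) := by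
          rw [Finset.sum_add_distrib, Finset.sum_const, Finset.card_univ, smul_eq_mul]
      _ ≤ Fintype.card V * T₂ + Δ ^ (T₂ + 1) * ∑ w, s w := by
          exact Nat.add_le_add_left hcomp _
      _ ≤ Fintype.card V * T₂ + Δ ^ (T₂ + 1) * (Fintype.card V * T₁) := by
          exact Nat.add_le_add_left (Nat.mul_le_mul_left _ hs) _
      _ = Fintype.card V * T₂ + Δ ^ (T₂ + 1) * Fintype.card V * T₁ := by ring
  refine ⟨hmain, ?_⟩
  rcases Nat.eq_zero_or_pos (Fintype.card V) with h0 | hpos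
  · rw [h0]
    simp
    positivity
  · rw [div_le_iff₀ (by exact_mod_cast hpos)]
    have := hmain
    calc (∑ v, t v : ℝ) ≤ (Fintype.card V * T₂ + Δ ^ (T₂ + 1) * Fintype.card V * T₁ : ℕ) := by
          exact_mod_cast hmain
      _ = ((T₂ : ℝ) + (Δ : ℝ) ^ (T₂ + 1) * T₁) * Fintype.card V := by
          push_cast; ring
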